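/- Let f be bi-univalent with inverse extension F. If zf'(z)/f(z) ≺ φ(z) and F'(w) ≺ φ(w), then the third Taylor coefficient of f satisfies |a₃| ≤ 7(B₁ + |B₂ − B₁|)/9. -/

import Mathlib

/-!
Write `g = zf'/f = φ ∘ ω` and `F' = φ ∘ χ` with Schwarz functions `ω`, `χ`. Comparing Taylor
coefficients in `g · f = z f'` and in `(F' ∘ f) · f' = 1` and eliminating `a₂` gives
`a₃ = g''(0) / 3 + F'''(0) / 18`.

For a Schwarz function `ω`, Schwarz–Pick applied to `ω(z) / z` gives
`|ω''(0)| ≤ 2 (1 - |ω'(0)|²)`. Hence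
`(φ ∘ ω)''(0) = B₁ (ω''(0) + 2 ω'(0)²) + 2 (B₂ - B₁) ω'(0)²` has modulus at most
`2 (B₁ + |B₂ - B₁|)`, and `|a₃| ≤ (2/3 + 1/9) (B₁ + |B₂ - B₁|)`.
-/

open Metric Set Complex

noncomputable section

def Subordinate (g h : ℂ → ℂ) : Prop :=
  ∃ ω : ℂ → ℂ, DifferentiableOn ℂ ω (ball 0 1) ∧ ω 0 = 0 ∧
    (∀ z ∈ ball (0 : ℂ) 1, ω z ∈ ball (0 : ℂ) 1) ∧
    ∀ z ∈ ball (0 : ℂ) 1, g z = h (ω z)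

open Filter Topology ComplexConjugate

section TaylorCoefficients

variable {𝕜 : Type*} [NontriviallyNormedField 𝕜]

theorem iteratedDeriv_two_eq_deriv_deriv (f : 𝕜 → 𝕜) :
    iteratedDeriv 2 f = deriv (deriv f) := by
  rw [iteratedDeriv_succ', iteratedDeriv_one]

theorem mul_eventuallyEq_of_eq_id_mul_deriv_div {f g : 𝕜 → 𝕜} {s : Set 𝕜} {f' : 𝕜}
    (hf : HasDerivAt f f' 0) (hf' : f' ≠ 0) (hf0 : f 0 = 0) (hs : s ∈ 𝓝 0)
    (hgf : ∀ z ∈ s, z ≠ 0 → g z = z * deriv f z / f z) :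
    g * f =ᶠ[𝓝 0] fun z => z * deriv f z := by
  have hne : ∀ᶠ z in 𝓝[≠] 0, f z ≠ 0 := by simpa [hf0] using hf.eventually_ne hf'
  filter_upwards [eventually_nhdsWithin_iff.1 hne, hs] with z hfz hz
  rcases eq_or_ne z 0 with rfl | hz0
  · simp [hf0]
  · rw [Pi.mul_apply, hgf z hz hz0, div_mul_cancel₀ _ (hfz hz0)]

variable [CompleteSpace 𝕜]

theorem iteratedDeriv_two_comp {h u : 𝕜 → 𝕜} {x : 𝕜} (hh : AnalyticAt 𝕜 h (u x))
    (hu : AnalyticAt 𝕜 u x) :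
    iteratedDeriv 2 (h ∘ u) x =
      iteratedDeriv 2 h (u x) * deriv u x ^ 2 + deriv h (u x) * iteratedDeriv 2 u x := by
  have hderiv : deriv (h ∘ u) =ᶠ[𝓝 x] (deriv h ∘ u) * deriv u := by
    filter_upwards [hu.eventually_analyticAt,
      hu.continuousAt.eventually hh.eventually_analyticAt] with y hu' hh'
    exact deriv_comp y hh'.differentiableAt hu'.differentiableAt
  rw [iteratedDeriv_succ', iteratedDeriv_one, hderiv.deriv_eq,
    deriv_mul (hh.deriv.differentiableAt.comp x hu.differentiableAt) hu.deriv.differentiableAt,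
    deriv_comp x hh.deriv.differentiableAt hu.differentiableAt,
    iteratedDeriv_two_eq_deriv_deriv, iteratedDeriv_two_eq_deriv_deriv]
  simp only [Function.comp_apply]
  ring

theorem iteratedDeriv_of_mul_eq_id_mul_deriv {f g : 𝕜 → 𝕜} (hf : AnalyticAt 𝕜 f 0)
    (hg : AnalyticAt 𝕜 g 0) (hf0 : f 0 = 0) (hf1 : deriv f 0 = 1)
    (h : g * f =ᶠ[𝓝 0] fun z => z * deriv f z) :
    iteratedDeriv 2 f 0 = 2 * deriv g 0 ∧
      2 * iteratedDeriv 3 f 0 = 3 * iteratedDeriv 2 g 0 + 3 * deriv g 0 * iteratedDeriv 2 f 0 := by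
  have leibniz : ∀ n : ℕ,
      ∑ i ∈ .range (n + 1), n.choose i * iteratedDeriv i g 0 * iteratedDeriv (n - i) f 0 =
        ∑ i ∈ .range (n + 1),
          n.choose i * iteratedDeriv i (fun z : 𝕜 => z) 0 *
            iteratedDeriv (n - i) (deriv f) 0 := by
    intro n
    rw [← iteratedDeriv_mul hg.contDiffAt hf.contDiffAt, h.iteratedDeriv_eq,
      iteratedDeriv_fun_mul (by fun_prop) hf.deriv.contDiffAt]
  have e1 := leibniz 1
  have e2 := leibniz 2
  have e3 := leibniz 3
  simp [Finset.sum_range_succ, iteratedDeriv_fun_id_zero, ← iteratedDeriv_succ', hf0, hf1]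
    at e1 e2 e3
  rw [e1] at e2 e3
  exact ⟨by linear_combination -e2, by linear_combination -e3⟩

theorem iteratedDeriv_of_eventually_leftInverse {f F : 𝕜 → 𝕜} (hf : AnalyticAt 𝕜 f 0)
    (hF : AnalyticAt 𝕜 F 0) (hf0 : f 0 = 0) (hf1 : deriv f 0 = 1)
    (hFf : ∀ᶠ z in 𝓝 0, F (f z) = z) :
    deriv F 0 = 1 ∧ iteratedDeriv 2 F 0 = -iteratedDeriv 2 f 0 ∧
      iteratedDeriv 3 F 0 = 3 * iteratedDeriv 2 f 0 ^ 2 - iteratedDeriv 3 f 0 := by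
  rw [← hf0] at hF
  have hchain : (deriv F ∘ f) * deriv f =ᶠ[𝓝 0] fun _ => 1 := by
    have hcomp : F ∘ f =ᶠ[𝓝 0] id := hFf
    filter_upwards [hcomp.deriv, hf.eventually_analyticAt,
      hf.continuousAt.eventually hF.eventually_analyticAt] with z hz hf' hF'
    rw [← deriv_id z, ← hz]
    exact (deriv_comp z hF'.differentiableAt hf'.differentiableAt).symm
  have leibniz : ∀ n : ℕ, ∑ i ∈ .range (n + 1),
      n.choose i * iteratedDeriv i (deriv F ∘ f) 0 * iteratedDeriv (n - i) (deriv f) 0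
        = iteratedDeriv n (fun _ : 𝕜 => (1 : 𝕜)) 0 := by
    intro n
    rw [← iteratedDeriv_mul (hF.deriv.comp hf).contDiffAt hf.deriv.contDiffAt,
      hchain.iteratedDeriv_eq]
  have d1 : deriv (deriv F ∘ f) 0 = iteratedDeriv 2 F 0 := by
    rw [deriv_comp 0 hF.deriv.differentiableAt hf.differentiableAt, hf0, hf1,
      iteratedDeriv_two_eq_deriv_deriv, mul_one]
  have d2 : iteratedDeriv 2 (deriv F ∘ f) 0
      = iteratedDeriv 3 F 0 + iteratedDeriv 2 F 0 * iteratedDeriv 2 f 0 := by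
    rw [iteratedDeriv_two_comp hF.deriv hf, hf0, hf1, iteratedDeriv_succ' (n := 2),
      iteratedDeriv_two_eq_deriv_deriv F]
    ring
  have e0 := leibniz 0
  have e1 := leibniz 1
  have e2 := leibniz 2
  simp [Finset.sum_range_succ, ← iteratedDeriv_succ', hf0, hf1, iteratedDeriv_const, d1, d2]
    at e0 e1 e2
  rw [e0] at e1 e2
  exact ⟨e0, by linear_combination e1,
    by linear_combination e2 - 3 * iteratedDeriv 2 f 0 * e1⟩

end TaylorCoefficients

theorem norm_sub_le_norm_one_sub_conj_mul {a w : ℂ} (ha : ‖a‖ ≤ 1) (hw : ‖w‖ ≤ 1) :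
    ‖w - a‖ ≤ ‖1 - conj a * w‖ := by
  have hidentity :
      normSq (1 - conj a * w) - normSq (w - a) = (1 - normSq a) * (1 - normSq w) := by
    simp only [normSq_apply, sub_re, sub_im, mul_re, mul_im, conj_re, conj_im, one_re, one_im]
    ring
  have ha' : normSq a ≤ 1 := by rw [← Complex.sq_norm]; exact pow_le_one₀ (norm_nonneg a) ha
  have hw' : normSq w ≤ 1 := by rw [← Complex.sq_norm]; exact pow_le_one₀ (norm_nonneg w) hw
  rw [← sq_le_sq₀ (norm_nonneg _) (norm_nonneg _), Complex.sq_norm, Complex.sq_norm,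
    ← sub_nonneg, hidentity]
  exact mul_nonneg (sub_nonneg.2 ha') (sub_nonneg.2 hw')

theorem deriv_eq_zero_of_mapsTo_closedBall_of_norm_eq_one {q : ℂ → ℂ}
    (hq : DifferentiableOn ℂ q (ball 0 1)) (hmaps : MapsTo q (ball 0 1) (closedBall 0 1))
    (hq0 : ‖q 0‖ = 1) : deriv q 0 = 0 := by
  have hball : ball (0 : ℂ) 1 ∈ 𝓝 0 := ball_mem_nhds 0 one_pos
  have hmax : IsLocalMax (norm ∘ q) 0 := by
    filter_upwards [hball] with z hz
    simpa [← hq0] using hmaps hz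
  have hconst : q =ᶠ[𝓝 0] fun _ => q 0 := eventually_eq_of_isLocalMax_norm
    (eventually_of_mem hball fun z hz => hq.differentiableAt (isOpen_ball.mem_nhds hz)) hmax
  rw [hconst.deriv_eq, deriv_const]

theorem norm_deriv_le_one_sub_sq_of_mapsTo_closedBall {q : ℂ → ℂ}
    (hq : DifferentiableOn ℂ q (ball 0 1)) (hmaps : MapsTo q (ball 0 1) (closedBall 0 1)) :
    ‖deriv q 0‖ ≤ 1 - ‖q 0‖ ^ 2 := by
  have hball : ball (0 : ℂ) 1 ∈ 𝓝 0 := ball_mem_nhds 0 one_pos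
  have hq0 : ‖q 0‖ ≤ 1 := by simpa using hmaps (mem_ball_self one_pos)
  rcases hq0.lt_or_eq with ha | ha
  · set a := q 0
    have hden : ∀ z ∈ ball (0 : ℂ) 1, 1 - conj a * q z ≠ 0 := by
      intro z hz hzero
      have hqz : ‖q z‖ ≤ 1 := by simpa using hmaps hz
      have : ‖conj a * q z‖ < 1 := by
        rw [norm_mul, norm_conj]
        nlinarith [norm_nonneg a, norm_nonneg (q z)]
      rw [← sub_eq_zero.1 hzero, norm_one] at this
      exact this.false
    -- compose with the disc automorphism moving `a` to `0` and apply the Schwarz lemma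
    set ψ : ℂ → ℂ := fun z => (q z - a) / (1 - conj a * q z)
    have hψ : DifferentiableOn ℂ ψ (ball 0 1) :=
      (hq.sub_const a).div ((differentiableOn_const 1).sub (hq.const_mul _)) hden
    have hψmaps : MapsTo ψ (ball 0 1) (closedBall (ψ 0) 1) := by
      intro z hz
      have hqz : ‖q z‖ ≤ 1 := by simpa using hmaps hz
      simp only [ψ, a, sub_self, zero_div, mem_closedBall_zero_iff, norm_div]
      exact div_le_one_of_le₀ (norm_sub_le_norm_one_sub_conj_mul ha.le hqz) (norm_nonneg _)
    have hpos : 0 < 1 - ‖a‖ ^ 2 := by nlinarith [norm_nonneg a]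
    have hderiv : deriv ψ 0 = deriv q 0 / ((1 - ‖a‖ ^ 2 : ℝ) : ℂ) := by
      have hqd := hq.differentiableAt hball
      simp only [ψ]
      rw [deriv_fun_div (hqd.sub_const a) ((hqd.const_mul _).const_sub 1)
        (hden 0 (mem_ball_self one_pos)), deriv_sub_const, deriv_const_sub, deriv_const_mul _ hqd,
        sub_self, conj_mul']
      have hne : (1 : ℂ) - ‖a‖ ^ 2 ≠ 0 := by exact_mod_cast hpos.ne'
      push_cast
      field_simp
      ring
    have hschwarz := norm_deriv_le_one_of_mapsTo_ball hψ hψmaps one_pos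
    rwa [hderiv, norm_div, norm_real, Real.norm_of_nonneg hpos.le, div_le_one hpos] at hschwarz
  · rw [deriv_eq_zero_of_mapsTo_closedBall_of_norm_eq_one hq hmaps ha, ha]
    norm_num

theorem norm_iteratedDeriv_two_le_of_mapsTo_closedBall {ω : ℂ → ℂ}
    (hω : DifferentiableOn ℂ ω (ball 0 1)) (hω0 : ω 0 = 0)
    (hmaps : MapsTo ω (ball 0 1) (closedBall 0 1)) :
    ‖iteratedDeriv 2 ω 0‖ ≤ 2 * (1 - ‖deriv ω 0‖ ^ 2) := by
  have hball : ball (0 : ℂ) 1 ∈ 𝓝 0 := ball_mem_nhds 0 one_pos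
  set q := dslope ω 0
  have hq : DifferentiableOn ℂ q (ball 0 1) := (differentiableOn_dslope hball).2 hω
  have hqmaps : MapsTo q (ball 0 1) (closedBall 0 1) := fun z hz => by
    simpa using norm_dslope_le_div_of_mapsTo_ball hω (by rwa [hω0]) hz
  have hωq : ω = fun z => z * q z :=
    funext fun z => by simpa [hω0] using (sub_smul_dslope ω 0 z).symm
  have hω2 : iteratedDeriv 2 ω 0 = 2 * deriv q 0 := by
    rw [hωq, iteratedDeriv_fun_mul (by fun_prop) (hq.analyticAt hball).contDiffAt]
    simp [iteratedDeriv_fun_id_zero]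
  rw [hω2, ← dslope_same ω 0, norm_mul, Complex.norm_two]
  linarith [norm_deriv_le_one_sub_sq_of_mapsTo_closedBall hq hqmaps]

namespace Subordinate

variable {g φ : ℂ → ℂ}

theorem differentiableOn (h : Subordinate g φ) (hφ : DifferentiableOn ℂ φ (ball 0 1)) :
    DifferentiableOn ℂ g (ball 0 1) := by
  obtain ⟨ω, hω, -, hmaps, hg⟩ := h
  exact (hφ.comp hω hmaps).congr hg

theorem norm_iteratedDeriv_two_le {B₁ B₂ : ℝ} (h : Subordinate g φ)
    (hφ : DifferentiableOn ℂ φ (ball 0 1)) (hB₁ : 0 ≤ B₁) (hφ1 : deriv φ 0 = B₁)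
    (hφ2 : iteratedDeriv 2 φ 0 = 2 * B₂) :
    ‖iteratedDeriv 2 g 0‖ ≤ 2 * (B₁ + |B₂ - B₁|) := by
  obtain ⟨ω, hω, hω0, hmaps, hg⟩ := h
  have hball : ball (0 : ℂ) 1 ∈ 𝓝 0 := ball_mem_nhds 0 one_pos
  have hgω : g =ᶠ[𝓝 0] φ ∘ ω := eventually_of_mem hball hg
  have hφω : AnalyticAt ℂ φ (ω 0) := by rw [hω0]; exact hφ.analyticAt hball
  have hschwarz := norm_iteratedDeriv_two_le_of_mapsTo_closedBall hω hω0
    fun z hz => ball_subset_closedBall (hmaps z hz)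
  rw [hgω.iteratedDeriv_eq, iteratedDeriv_two_comp hφω (hω.analyticAt hball), hω0, hφ1, hφ2]
  set x := deriv ω 0
  set y := iteratedDeriv 2 ω 0
  have hx : ‖x‖ ^ 2 ≤ 1 := by nlinarith [norm_nonneg y]
  calc ‖2 * (B₂ : ℂ) * x ^ 2 + B₁ * y‖
      = ‖(B₁ : ℂ) * (y + 2 * x ^ 2) + 2 * ((B₂ - B₁ : ℝ) : ℂ) * x ^ 2‖ := by
        push_cast; ring_nf
    _ ≤ B₁ * (‖y‖ + 2 * ‖x‖ ^ 2) + 2 * |B₂ - B₁| * ‖x‖ ^ 2 := by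
      refine (norm_add_le _ _).trans (add_le_add ?_ ?_)
      · rw [norm_mul, norm_real, Real.norm_of_nonneg hB₁]
        gcongr
        exact (norm_add_le _ _).trans_eq (by simp)
      · simp only [norm_mul, norm_pow, norm_real, Real.norm_eq_abs, Complex.norm_two, le_refl]
    _ ≤ 2 * (B₁ + |B₂ - B₁|) := by nlinarith [abs_nonneg (B₂ - B₁)]

end Subordinate

theorem stmt15_general
    (f F : ℂ → ℂ)
    (hf : DifferentiableOn ℂ f (ball 0 1)) (hf0 : f 0 = 0) (hf1 : deriv f 0 = 1)
    (hF : DifferentiableOn ℂ F (ball 0 1))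
    (hFf : ∀ᶠ z in nhds (0 : ℂ), F (f z) = z)
    (φ : ℂ → ℂ) (B₁ B₂ : ℝ)
    (hφ : DifferentiableOn ℂ φ (ball 0 1))
    (hB₁ : 0 < B₁) (hφ1 : deriv φ 0 = (B₁ : ℂ)) (hφ2 : iteratedDeriv 2 φ 0 = 2 * (B₂ : ℂ))
    (g : ℂ → ℂ)
    (hgf : ∀ z ∈ ball (0 : ℂ) 1, z ≠ 0 → g z = z * deriv f z / f z)
    (hgsub : Subordinate g φ)
    (hFsub : Subordinate (deriv F) φ) :
    ‖iteratedDeriv 3 f 0 / 6‖ ≤ 7 * (B₁ + |B₂ - B₁|) / 9 := by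
  have hball : ball (0 : ℂ) 1 ∈ 𝓝 0 := ball_mem_nhds 0 one_pos
  have hfa : AnalyticAt ℂ f 0 := hf.analyticAt hball
  have hmul : g * f =ᶠ[𝓝 0] fun z => z * deriv f z :=
    mul_eventuallyEq_of_eq_id_mul_deriv_div (hf1 ▸ hfa.differentiableAt.hasDerivAt)
      one_ne_zero hf0 hball hgf
  obtain ⟨hf2, hf3⟩ := iteratedDeriv_of_mul_eq_id_mul_deriv hfa
    ((hgsub.differentiableOn hφ).analyticAt hball) hf0 hf1 hmul
  obtain ⟨-, -, hF3⟩ :=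
    iteratedDeriv_of_eventually_leftInverse hfa (hF.analyticAt hball) hf0 hf1 hFf
  rw [iteratedDeriv_succ'] at hF3
  have ha₃ : iteratedDeriv 3 f 0 / 6 =
      iteratedDeriv 2 g 0 / 3 + iteratedDeriv 2 (deriv F) 0 / 18 := by
    linear_combination (1 / 9) * hf3 - (1 / 18) * hF3 - (iteratedDeriv 2 f 0 / 6) * hf2
  have hg2 := hgsub.norm_iteratedDeriv_two_le hφ hB₁.le hφ1 hφ2
  have hF2 := hFsub.norm_iteratedDeriv_two_le hφ hB₁.le hφ1 hφ2
  calc ‖iteratedDeriv 3 f 0 / 6‖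
      ≤ ‖iteratedDeriv 2 g 0‖ / 3 + ‖iteratedDeriv 2 (deriv F) 0‖ / 18 := by
        rw [ha₃]
        refine (norm_add_le _ _).trans_eq ?_
        simp
    _ ≤ 7 * (B₁ + |B₂ - B₁|) / 9 := by linarith

theorem stmt15
    (f F : ℂ → ℂ)
    (hf : DifferentiableOn ℂ f (ball 0 1)) (hf0 : f 0 = 0) (hf1 : deriv f 0 = 1)
    (hfi : InjOn f (ball 0 1))
    (hF : DifferentiableOn ℂ F (ball 0 1)) (hF0 : F 0 = 0) (hFi : InjOn F (ball 0 1))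
    (hFf : ∀ᶠ z in nhds (0 : ℂ), F (f z) = z)
    (φ : ℂ → ℂ) (B₁ B₂ : ℝ)
    (hφ : DifferentiableOn ℂ φ (ball 0 1)) (hφ0 : φ 0 = 1)
    (hB₁ : 0 < B₁) (hφ1 : deriv φ 0 = (B₁ : ℂ)) (hφ2 : iteratedDeriv 2 φ 0 = 2 * (B₂ : ℂ))
    (g : ℂ → ℂ) (hg0 : g 0 = 1)
    (hgf : ∀ z ∈ ball (0 : ℂ) 1, z ≠ 0 → g z = z * deriv f z / f z)
    (hgsub : Subordinate g φ)
    (hFsub : Subordinate (deriv F) φ) :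
    ‖iteratedDeriv 3 f 0 / 6‖ ≤ 7 * (B₁ + |B₂ - B₁|) / 9 :=
  stmt15_general f F hf hf0 hf1 hF hFf φ B₁ B₂ hφ hB₁ hφ1 hφ2 g hgf hgsub hFsub
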